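/- arXiv:0711.3368 — 3 statements merged into one kernel-verified Lean document; each statement's English description precedes it below -/
import Mathlib

section
/- For natural numbers n, d, j with d ≥ 1 and j ≥ d, the alternating sum ∑_{r=0}^{d-1} (-1)^{(d-1)-r} C(n,r) C(n-r, j-r) equals C(n,j) C(j-1, d-1). -/
/-! Subset-of-a-subset counting, `C(n,r) C(n-r,j-r) = C(n,j) C(j,r)`, pulls `C(n,j)` out of the
sum; what remains is a partial alternating row sum of Pascal's triangle, which telescopes to
`C(j-1,d-1)` via `C(j,r) = C(j-1,r-1) + C(j-1,r)`. -/

open Finset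

theorem Int.alternating_sum_range_choose_rev (n m : ℕ) :
    ∑ k ∈ Finset.range (m + 1), (-1 : ℤ) ^ (m - k) * (n + 1).choose k = n.choose m := by
  have hsign : ∀ k ∈ Finset.range (m + 1), (-1 : ℤ) ^ (m - k) = (-1) ^ m * (-1) ^ k := by
    intro k hk
    obtain ⟨l, rfl⟩ := Nat.exists_eq_add_of_le (Nat.lt_succ_iff.mp (mem_range.mp hk))
    rw [Nat.add_sub_cancel_left, pow_add, mul_comm ((-1 : ℤ) ^ k), mul_assoc, ← pow_add,
      Even.neg_one_pow ⟨k, rfl⟩, mul_one]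
  calc ∑ k ∈ Finset.range (m + 1), (-1 : ℤ) ^ (m - k) * (n + 1).choose k
      = (-1) ^ m * ∑ k ∈ Finset.range (m + 1), (-1 : ℤ) ^ k * (n + 1).choose k := by
        rw [mul_sum]
        exact sum_congr rfl fun k hk => by rw [hsign k hk, mul_assoc]
    _ = n.choose m := by
        rw [Int.alternating_sum_range_choose_eq_choose, ← mul_assoc, ← pow_add,
          Even.neg_one_pow ⟨m, rfl⟩, one_mul]

/-- For naturals `n, d, j` with `d ≥ 1` and `j ≥ d`, the alternating sum
`∑_{r=0}^{d-1} (-1)^{(d-1)-r} C(n,r) C(n-r, j-r)` equals `C(n,j) C(j-1, d-1)`. -/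
theorem alternating_sum_choose_eq (n d j : ℕ) (hd : 1 ≤ d) (hj : d ≤ j) :
    ∑ r ∈ Finset.range d,
      (-1 : ℤ) ^ (d - 1 - r) * (n.choose r) * ((n - r).choose (j - r)) =
    (n.choose j) * ((j - 1).choose (d - 1)) := by
  obtain ⟨m, rfl⟩ := Nat.exists_eq_add_of_le' hd
  obtain ⟨i, rfl⟩ := Nat.exists_eq_add_of_le' (hd.trans hj)
  have hchoose : ∀ r ∈ range (m + 1),
      ((n.choose r * (n - r).choose (i + 1 - r) : ℕ) : ℤ) = n.choose (i + 1) * (i + 1).choose r :=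
    fun r hr => by rw [← Nat.choose_mul (by grind), Nat.cast_mul]
  simp only [Nat.add_sub_cancel]
  calc ∑ r ∈ range (m + 1), (-1 : ℤ) ^ (m - r) * n.choose r * (n - r).choose (i + 1 - r)
      = ∑ r ∈ range (m + 1), n.choose (i + 1) * ((-1 : ℤ) ^ (m - r) * (i + 1).choose r) :=
        sum_congr rfl fun r hr => by
          rw [mul_assoc, ← Nat.cast_mul, hchoose r hr]
          ring
    _ = n.choose (i + 1) * i.choose m := by
        rw [← mul_sum, Int.alternating_sum_range_choose_rev]
end

section
/- Let Δ and Γ be simplicial complexes on disjoint vertex sets [n] and [m]. Then the Alexander dual of their join satisfies (Δ * Γ)* = (Δ* * Δ_m) ∪ (Δ_n * Γ*), where Δ_n and Δ_m are the full simplices on [n] and [m], and duals are taken with respect to the vertex set [n] ⊔ [m] on the left side and [n], [m] respectively on the right. -/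
/-- The join of a complex on `Fin n` and a complex on `Fin m`, realized on `Fin (n+m)`. -/
def joinC {n m : ℕ} (K1 : Set (Finset (Fin n))) (K2 : Set (Finset (Fin m))) :
    Set (Finset (Fin (n + m))) :=
  {S | ∃ F ∈ K1, ∃ G ∈ K2, S = F.image (Fin.castAdd m) ∪ G.image (Fin.natAdd n)}

/-- The Alexander dual of a complex on a finite vertex type. -/
def dualC {V : Type*} [Fintype V] [DecidableEq V] (K : Set (Finset V)) : Set (Finset V) :=
  {F | Finset.univ \ F ∉ K}

section Aux

variable {n m : ℕ}

lemma castAdd_inj : Function.Injective (Fin.castAdd m : Fin n → Fin (n + m)) := by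
  intro a b h
  exact Fin.val_injective (by simpa using congrArg Fin.val h)

lemma natAdd_inj : Function.Injective (Fin.natAdd n : Fin m → Fin (n + m)) := by
  intro a b h
  have := congrArg Fin.val h
  simp only [Fin.coe_natAdd] at this
  exact Fin.val_injective (by omega)

lemma castAdd_ne_natAdd (a : Fin n) (b : Fin m) :
    (Fin.castAdd m a : Fin (n + m)) ≠ Fin.natAdd n b := by
  intro h
  have := congrArg Fin.val h
  simp only [Fin.coe_castAdd, Fin.coe_natAdd] at this
  omega

lemma mem_union_castAdd (F : Finset (Fin n)) (G : Finset (Fin m)) (a : Fin n) :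
    Fin.castAdd m a ∈ F.image (Fin.castAdd m) ∪ G.image (Fin.natAdd n) ↔ a ∈ F := by
  simp only [Finset.mem_union, Finset.mem_image]
  constructor
  · rintro (⟨x, hx, hxa⟩ | ⟨y, hy, hya⟩)
    · rwa [castAdd_inj hxa] at hx
    · exact absurd hya.symm (castAdd_ne_natAdd a y)
  · intro h; exact Or.inl ⟨a, h, rfl⟩

lemma mem_union_natAdd (F : Finset (Fin n)) (G : Finset (Fin m)) (b : Fin m) :
    Fin.natAdd n b ∈ F.image (Fin.castAdd m) ∪ G.image (Fin.natAdd n) ↔ b ∈ G := by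
  simp only [Finset.mem_union, Finset.mem_image]
  constructor
  · rintro (⟨x, hx, hxa⟩ | ⟨y, hy, hya⟩)
    · exact absurd hxa (castAdd_ne_natAdd x b)
    · rwa [natAdd_inj hya] at hy
  · intro h; exact Or.inr ⟨b, h, rfl⟩

lemma sep_eq {F F' : Finset (Fin n)} {G G' : Finset (Fin m)}
    (h : F.image (Fin.castAdd m) ∪ G.image (Fin.natAdd n)
       = F'.image (Fin.castAdd m) ∪ G'.image (Fin.natAdd n)) : F = F' ∧ G = G' := by
  constructor
  · ext a
    rw [← mem_union_castAdd F G a, h, mem_union_castAdd]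
  · ext b
    rw [← mem_union_natAdd F G b, h, mem_union_natAdd]

lemma compl_union_images (F : Finset (Fin n)) (G : Finset (Fin m)) :
    Finset.univ \ (F.image (Fin.castAdd m) ∪ G.image (Fin.natAdd n))
      = (Finset.univ \ F).image (Fin.castAdd m) ∪ (Finset.univ \ G).image (Fin.natAdd n) := by
  ext x
  induction x using Fin.addCases with
  | left a =>
    rw [mem_union_castAdd, Finset.mem_sdiff, Finset.mem_sdiff, mem_union_castAdd]
    simp
  | right b =>
    rw [mem_union_natAdd, Finset.mem_sdiff, Finset.mem_sdiff, mem_union_natAdd]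
    simp

lemma decomp (S : Finset (Fin (n + m))) :
    ∃ (F : Finset (Fin n)) (G : Finset (Fin m)), S = F.image (Fin.castAdd m) ∪ G.image (Fin.natAdd n) := by
  refine ⟨Finset.univ.filter (fun a => Fin.castAdd m a ∈ S),
          Finset.univ.filter (fun b => Fin.natAdd n b ∈ S), ?_⟩
  ext x
  induction x using Fin.addCases with
  | left a => rw [mem_union_castAdd]; simp
  | right b => rw [mem_union_natAdd]; simp

end Aux

/-- Alexander dual of a join: `(Δ * Γ)* = (Δ* * Δ_m) ∪ (Δ_n * Γ*)`, where `Δ_n`, `Δ_m`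
are the full simplices on the respective vertex sets. -/
theorem dual_join {n m : ℕ} (Δ : Set (Finset (Fin n))) (Γ : Set (Finset (Fin m)))
    (hΔ : ∀ F ∈ Δ, ∀ G ⊆ F, G ∈ Δ) (hΓ : ∀ F ∈ Γ, ∀ G ⊆ F, G ∈ Γ) :
    dualC (joinC Δ Γ) =
      joinC (dualC Δ) (Set.univ : Set (Finset (Fin m))) ∪
        joinC (Set.univ : Set (Finset (Fin n))) (dualC Γ) := by
  ext S
  obtain ⟨F, G, rfl⟩ := decomp S
  constructor
  · intro hS
    simp only [dualC, Set.mem_setOf_eq, joinC, compl_union_images] at hS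
    by_cases hF : Finset.univ \ F ∈ Δ
    · right
      refine ⟨F, Set.mem_univ _, G, ?_, rfl⟩
      intro hG
      exact hS ⟨_, hF, _, hG, rfl⟩
    · left
      exact ⟨F, hF, G, Set.mem_univ _, rfl⟩
  · rintro (⟨F', hF', G', -, h⟩ | ⟨F', -, G', hG', h⟩) <;>
      obtain ⟨rfl, rfl⟩ := sep_eq h <;>
      · intro hS
        simp only [joinC, Set.mem_setOf_eq, compl_union_images] at hS
        obtain ⟨F'', hF'', G'', hG'', h2⟩ := hS
        obtain ⟨h3, h4⟩ := sep_eq h2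
        first
          | exact hF' (h3 ▸ hF'')
          | exact hG' (h4 ▸ hG'')
end

section
/- The independence complex of the d(a_1,...,a_t)-complete multipartite hypergraph K^{d(a)}_{n_1,...,n_t} has Alexander dual equal to the join Γ_{n_1-a_1-1}(n_1) * ... * Γ_{n_t-a_t-1}(n_t), where Γ_r(n_s) denotes the r-skeleton of the full simplex on the block [n_s]. -/
lemma card_block_univ {t : ℕ} (n : Fin t → ℕ) (s0 : Fin t) :
    ((Finset.univ : Finset ((s : Fin t) × Fin (n s))).filter
        (fun x => x.1 = s0)).card = n s0 := by
  have : (Finset.univ : Finset ((s : Fin t) × Fin (n s))).filter (fun x => x.1 = s0) =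
      (Finset.univ : Finset (Fin (n s0))).map ⟨Sigma.mk s0, sigma_mk_injective⟩ := by
    ext ⟨i, j⟩
    simp only [Finset.mem_filter, Finset.mem_univ, true_and, Finset.mem_map,
      Function.Embedding.coeFn_mk]
    constructor
    · rintro rfl; exact ⟨j, rfl⟩
    · rintro ⟨y, h⟩; cases h; rfl
  rw [this, Finset.card_map, Finset.card_univ, Fintype.card_fin]

/-- The Alexander dual of the independence complex of the `d(a_1,...,a_t)`-complete
multipartite hypergraph `K^{d(a)}_{n_1,...,n_t}` (edges: the `d`-sets with exactly `a_s`
elements in block `[n_s]`, `d = ∑ a_s`) is the join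
`Γ_{n_1-a_1-1}(n_1) * ... * Γ_{n_t-a_t-1}(n_t)` of skeleta, i.e. the complex of all
sets having at most `n_s - a_s` elements in each block `[n_s]`. -/
theorem alexanderDual_indep_da (t : ℕ) (ht : 1 ≤ t) (n a : Fin t → ℕ)
    (ha : ∀ s, 1 ≤ a s) (han : ∀ s, a s ≤ n s) :
    {F : Finset ((s : Fin t) × Fin (n s)) |
        (Finset.univ \ F) ∉
          {G : Finset ((s : Fin t) × Fin (n s)) |
            ∀ e ∈ {e : Finset ((s : Fin t) × Fin (n s)) |
                    ∀ s, (e.filter (fun x => x.1 = s)).card = a s},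
              ¬ e ⊆ G}} =
      {F : Finset ((s : Fin t) × Fin (n s)) |
        ∀ s, (F.filter (fun x => x.1 = s)).card ≤ n s - a s} := by
  ext F
  simp only [Set.mem_setOf_eq]
  push_neg
  have hGcard : ∀ s0 : Fin t,
      ((Finset.univ \ F).filter (fun x => x.1 = s0)).card =
        n s0 - (F.filter (fun x => x.1 = s0)).card := by
    intro s0
    have hsd : (Finset.univ \ F).filter (fun x => x.1 = s0) =
        (Finset.univ : Finset _).filter (fun x => x.1 = s0) \
          F.filter (fun x => x.1 = s0) := by
      ext x
      simp only [Finset.mem_filter, Finset.mem_sdiff, Finset.mem_univ, true_and]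
      tauto
    rw [hsd, Finset.card_sdiff_of_subset
      (Finset.filter_subset_filter _ (Finset.subset_univ F)), card_block_univ]
  have hFle : ∀ s0 : Fin t, (F.filter (fun x => x.1 = s0)).card ≤ n s0 := by
    intro s0
    calc (F.filter (fun x => x.1 = s0)).card
        ≤ ((Finset.univ : Finset _).filter (fun x => x.1 = s0)).card :=
          Finset.card_le_card (Finset.filter_subset_filter _ (Finset.subset_univ F))
      _ = n s0 := card_block_univ n s0
  constructor
  · rintro ⟨e, he, hsub⟩ s0
    have h1 : a s0 ≤ ((Finset.univ \ F).filter (fun x => x.1 = s0)).card := by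
      rw [← he s0]
      exact Finset.card_le_card (Finset.filter_subset_filter _ hsub)
    have := hGcard s0
    have := hFle s0
    omega
  · intro h
    have hbig : ∀ s0, a s0 ≤ ((Finset.univ \ F).filter (fun x => x.1 = s0)).card := by
      intro s0
      have := hGcard s0
      have := h s0
      have := han s0
      have := hFle s0
      omega
    choose ts hts hcard using fun s0 => Finset.exists_subset_card_eq (hbig s0)
    refine ⟨Finset.univ.biUnion ts, ?_, ?_⟩
    · intro s0
      have hfilter : (Finset.univ.biUnion ts).filter (fun x => x.1 = s0) = ts s0 := by
        ext x
        simp only [Finset.mem_filter, Finset.mem_biUnion, Finset.mem_univ, true_and]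
        constructor
        · rintro ⟨⟨s', hx⟩, hx1⟩
          have h2 := (Finset.mem_filter.mp (hts s' hx)).2
          exact (h2.symm.trans hx1) ▸ hx
        · intro hx
          exact ⟨⟨s0, hx⟩, (Finset.mem_filter.mp (hts s0 hx)).2⟩
      rw [hfilter, hcard]
    · exact Finset.biUnion_subset.mpr fun s0 _ =>
        (hts s0).trans (Finset.filter_subset _ _)
end
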